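/- arXiv:1810.05279 — 2 statements merged into one kernel-verified Lean document; each statement's English description precedes it below -/
import Mathlib

section
/- Let G be the niche graph of a bipartite tournament D, and let u, v be distinct vertices in the same partite set of D. Then u and v are nonadjacent in G if and only if N⁺_D(u) = N⁻_D(v). -/
/-!
A vertex `w` joined to `u` lies in the other part, hence is joined to `v` by exactly one arc.
So if `u` and `v` have no common out- or in-neighbour, `u → w` forces `w → v` and `w → v`
forces `u → w`. Conversely, if `N⁺(u) = N⁻(v)`, a common out-neighbour `w` of `u` and `v`
would also satisfy `w → v`, and a common in-neighbour `w` would satisfy `u → w`: both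
contradict the asymmetry of arcs.
-/

structure BipTournament (α : Type*) where
  U : Set α
  V : Set α
  A : α → α → Prop
  disj : Disjoint U V
  cover : U ∪ V = Set.univ
  orient : ∀ u ∈ U, ∀ v ∈ V, Xor' (A u v) (A v u)
  arcs : ∀ x y, A x y → (x ∈ U ∧ y ∈ V) ∨ (x ∈ V ∧ y ∈ U)

def BipTournament.outN {α : Type*} (D : BipTournament α) (x : α) : Set α := {y | D.A x y}

def BipTournament.inN {α : Type*} (D : BipTournament α) (x : α) : Set α := {y | D.A y x}

def BipTournament.niche {α : Type*} (D : BipTournament α) : SimpleGraph α where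
  Adj x y := x ≠ y ∧ ((∃ w, D.A x w ∧ D.A y w) ∨ (∃ w, D.A w x ∧ D.A w y))
  symm := ⟨by
    rintro x y ⟨h, h'⟩
    exact ⟨h.symm, h'.imp (fun ⟨w, a, b⟩ => ⟨w, b, a⟩) (fun ⟨w, a, b⟩ => ⟨w, b, a⟩)⟩⟩
  loopless := ⟨fun x h => h.1 rfl⟩

namespace BipTournament

variable {α : Type*} (D : BipTournament α)

theorem A_or_A_and_not_both {x y : α} (hxy : (x ∈ D.U ∧ y ∈ D.V) ∨ (x ∈ D.V ∧ y ∈ D.U)) :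
    (D.A x y ∨ D.A y x) ∧ ¬ (D.A x y ∧ D.A y x) := by
  rcases hxy with ⟨hx, hy⟩ | ⟨hx, hy⟩
  · exact (xor_iff_or_and_not_and _ _).mp (D.orient x hx y hy)
  · obtain ⟨hor, hnand⟩ := (xor_iff_or_and_not_and _ _).mp (D.orient y hy x hx)
    exact ⟨hor.symm, fun hand => hnand hand.symm⟩

theorem not_A_of_A {x y : α} (hxy : D.A x y) : ¬ D.A y x :=
  fun hyx => (D.A_or_A_and_not_both (D.arcs x y hxy)).2 ⟨hxy, hyx⟩

theorem mem_opposite_parts_of_A_or_A {u w : α} (huw : D.A u w ∨ D.A w u) :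
    (u ∈ D.U ∧ w ∈ D.V) ∨ (u ∈ D.V ∧ w ∈ D.U) := by
  rcases huw with huw | hwu
  · exact D.arcs u w huw
  · exact (D.arcs w u hwu).symm.imp And.symm And.symm

theorem A_or_A_of_same_part {u v w : α} (h : (u ∈ D.U ∧ v ∈ D.U) ∨ (u ∈ D.V ∧ v ∈ D.V))
    (huw : D.A u w ∨ D.A w u) : D.A v w ∨ D.A w v := by
  refine (D.A_or_A_and_not_both ?_).1
  have hopp := D.mem_opposite_parts_of_A_or_A huw
  have hu : u ∈ D.U → u ∉ D.V := fun hu => Set.disjoint_left.mp D.disj hu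
  tauto

theorem not_niche_adj_of_outN_eq_inN {u v : α} (he : D.outN u = D.inN v) :
    ¬ D.niche.Adj u v := by
  have hmem : ∀ w, D.A u w ↔ D.A w v := fun w => Set.ext_iff.mp he w
  rintro ⟨-, ⟨w, huw, hvw⟩ | ⟨w, hwu, hwv⟩⟩
  · exact D.not_A_of_A hvw ((hmem w).mp huw)
  · exact D.not_A_of_A hwu ((hmem w).mpr hwv)

theorem outN_eq_inN_of_not_niche_adj {u v : α} (huv : u ≠ v)
    (h : (u ∈ D.U ∧ v ∈ D.U) ∨ (u ∈ D.V ∧ v ∈ D.V)) (hn : ¬ D.niche.Adj u v) :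
    D.outN u = D.inN v := by
  have hvu : (v ∈ D.U ∧ u ∈ D.U) ∨ (v ∈ D.V ∧ u ∈ D.V) := h.imp And.symm And.symm
  ext w
  constructor
  · intro huw
    refine (D.A_or_A_of_same_part h (.inl huw)).resolve_left fun hvw => ?_
    exact hn ⟨huv, .inl ⟨w, huw, hvw⟩⟩
  · intro hwv
    refine (D.A_or_A_of_same_part hvu (.inr hwv)).resolve_right fun hwu => ?_
    exact hn ⟨huv, .inr ⟨w, hwu, hwv⟩⟩

end BipTournament

theorem stmt5 {α : Type*} (D : BipTournament α) (u v : α) (huv : u ≠ v)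
    (h : (u ∈ D.U ∧ v ∈ D.U) ∨ (u ∈ D.V ∧ v ∈ D.V)) :
    ¬ D.niche.Adj u v ↔ D.outN u = D.inN v :=
  ⟨D.outN_eq_inN_of_not_niche_adj huv h, D.not_niche_adj_of_outN_eq_inN⟩
end

section
/- The niche graph of a bipartite tournament contains no induced path on 4 vertices. -/
/-!
If `y` and `z` have a common out-neighbour `v`, then `x` (in the part of `y` and `z`) must
receive an arc from `v`, as otherwise `x` and `z` would share the out-neighbour `v`; likewise
`v → w`, since otherwise `y` and `w` would share it. So `v` is a common in-neighbour of `x` and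
`w`, which are therefore adjacent. A common in-neighbour of `y` and `z` is the same situation
in the reversed bipartite tournament, which has the same niche graph.
-/

namespace BipTournament

variable {α : Type*} (D : BipTournament α) {x y z w v : α}

theorem mem_V_iff_notMem_U : x ∈ D.V ↔ x ∉ D.U := by
  refine ⟨fun hV hU => Set.disjoint_left.mp D.disj hU hV, fun hU => ?_⟩
  have hx : x ∈ D.U ∪ D.V := D.cover ▸ Set.mem_univ x
  exact hx.resolve_left hU

variable {D}

theorem mem_U_iff_notMem_U_of_A (h : D.A x y) : x ∈ D.U ↔ y ∉ D.U := by
  rcases D.arcs x y h with ⟨hx, hy⟩ | ⟨hx, hy⟩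
  · exact iff_of_true hx ((D.mem_V_iff_notMem_U).mp hy)
  · exact iff_of_false ((D.mem_V_iff_notMem_U).mp hx) (not_not.mpr hy)

theorem A_or_A_of_mem_U_iff_notMem_U (h : x ∈ D.U ↔ y ∉ D.U) : D.A x y ∨ D.A y x := by
  by_cases hx : x ∈ D.U
  · exact (D.orient x hx y ((D.mem_V_iff_notMem_U).mpr (h.mp hx))).imp And.left And.left
  · have hy : y ∈ D.U := not_not.mp (mt h.mpr hx)
    exact (D.orient y hy x ((D.mem_V_iff_notMem_U).mpr hx)).symm.imp And.left And.left

theorem mem_U_iff_of_niche_adj (h : D.niche.Adj x y) : x ∈ D.U ↔ y ∈ D.U := by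
  obtain ⟨-, ⟨v, hxv, hyv⟩ | ⟨v, hvx, hvy⟩⟩ := h
  · exact (mem_U_iff_notMem_U_of_A hxv).trans (mem_U_iff_notMem_U_of_A hyv).symm
  · exact not_iff_not.mp
      ((mem_U_iff_notMem_U_of_A hvx).symm.trans (mem_U_iff_notMem_U_of_A hvy))

theorem A_of_not_niche_adj (hzv : D.A z v) (hside : x ∈ D.U ↔ z ∈ D.U) (hxz : x ≠ z)
    (hnadj : ¬ D.niche.Adj x z) : D.A v x :=
  (A_or_A_of_mem_U_iff_notMem_U (hside.trans (mem_U_iff_notMem_U_of_A hzv))).resolve_left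
    fun hxv => hnadj ⟨hxz, Or.inl ⟨v, hxv, hzv⟩⟩

theorem niche_adj_of_common_outNeighbor (hxy : D.niche.Adj x y) (hzw : D.niche.Adj z w)
    (hyv : D.A y v) (hzv : D.A z v) (hxz : x ≠ z) (hyw : y ≠ w) (hxw : x ≠ w)
    (hnxz : ¬ D.niche.Adj x z) (hnyw : ¬ D.niche.Adj y w) : D.niche.Adj x w := by
  have hyz : y ∈ D.U ↔ z ∈ D.U :=
    (mem_U_iff_notMem_U_of_A hyv).trans (mem_U_iff_notMem_U_of_A hzv).symm
  have hvx : D.A v x := A_of_not_niche_adj hzv ((mem_U_iff_of_niche_adj hxy).trans hyz) hxz hnxz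
  have hvw : D.A v w :=
    A_of_not_niche_adj hyv ((mem_U_iff_of_niche_adj hzw).symm.trans hyz.symm) hyw.symm
      fun h => hnyw h.symm
  exact ⟨hxw, Or.inr ⟨v, hvx, hvw⟩⟩

variable (D)

def reverse : BipTournament α where
  U := D.U
  V := D.V
  A x y := D.A y x
  disj := D.disj
  cover := D.cover
  orient u hu v hv := (D.orient u hu v hv).symm
  arcs x y h := (D.arcs y x h).symm.imp And.symm And.symm

@[simp]
theorem niche_reverse : D.reverse.niche = D.niche := by
  ext x y
  exact and_congr_right fun _ => or_comm

end BipTournament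

theorem stmt9 {α : Type*} (D : BipTournament α) :
    ¬ ∃ x y z w : α, x ≠ y ∧ x ≠ z ∧ x ≠ w ∧ y ≠ z ∧ y ≠ w ∧ z ≠ w ∧
      D.niche.Adj x y ∧ D.niche.Adj y z ∧ D.niche.Adj z w ∧
      ¬ D.niche.Adj x z ∧ ¬ D.niche.Adj x w ∧ ¬ D.niche.Adj y w := by
  rintro ⟨x, y, z, w, -, hxz, hxw, -, hyw, -, hxy, ⟨-, ⟨v, hyv, hzv⟩ | ⟨v, hvy, hvz⟩⟩, hzw,
    hnxz, hnxw, hnyw⟩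
  · exact hnxw <| BipTournament.niche_adj_of_common_outNeighbor hxy hzw hyv hzv hxz hyw hxw
      hnxz hnyw
  · rw [← D.niche_reverse] at hxy hzw hnxz hnyw hnxw
    exact hnxw <| BipTournament.niche_adj_of_common_outNeighbor hxy hzw hvy hvz hxz hyw hxw
      hnxz hnyw
end
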